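/- Any t−1 shares of a (t, n) Shamir scheme over a finite field F are jointly independent of the secret: for any fixed secret S, distinct nonzero points x_1,…,x_{t−1}, and any target values y_1,…,y_{t−1} in F, the probability over the uniform random choice of coefficients a_1,…,a_{t−1} that f(x_j) = y_j for all j equals |F|^{-(t−1)}. -/

import Mathlib

/-!
Writing `V` for the matrix `(x j ^ (k + 1))`, the shares are `S + V a`. Since
`V = diagonal x * vandermonde x` and the `x j` are distinct and nonzero, `V` is invertible,
so `a ↦ S + V a` is a bijection of `F^(t-1)`: each tuple of shares comes from exactly one of
the `|F|^(t-1)` coefficient vectors.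
-/

theorem Function.Bijective.card_subtype_apply_eq_one {α β : Type*} [Fintype α] {f : α → β}
    (hf : Function.Bijective f) (b : β) [DecidablePred (f · = b)] :
    Fintype.card {a // f a = b} = 1 :=
  let ⟨a, ha, hunique⟩ := hf.existsUnique b
  Fintype.card_eq_one_iff.2 ⟨⟨a, ha⟩, fun a' => Subtype.ext (hunique a' a'.2)⟩

namespace Matrix

variable {R : Type*} [CommRing R] {n : ℕ}

def shiftedVandermonde (v : Fin n → R) : Matrix (Fin n) (Fin n) R :=
  .of fun i j => v i ^ (j.val + 1)

theorem shiftedVandermonde_eq_diagonal_mul (v : Fin n → R) :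
    shiftedVandermonde v = diagonal v * vandermonde v := by
  ext i j
  simp [shiftedVandermonde, vandermonde_apply, pow_succ', diagonal_mul]

theorem det_shiftedVandermonde_ne_zero [IsDomain R] {v : Fin n → R}
    (hv : Function.Injective v) (hv0 : ∀ i, v i ≠ 0) : (shiftedVandermonde v).det ≠ 0 := by
  rw [shiftedVandermonde_eq_diagonal_mul, det_mul, det_diagonal]
  exact mul_ne_zero (Finset.prod_ne_zero_iff.2 fun i _ => hv0 i) (det_vandermonde_ne_zero_iff.2 hv)

theorem mulVec_bijective_of_isUnit {m : Type*} [Fintype m] [DecidableEq m] {A : Matrix m m R}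
    (hA : IsUnit A) : Function.Bijective A.mulVec :=
  ⟨mulVec_injective_of_isUnit hA, mulVec_surjective_iff_isUnit.2 hA⟩

end Matrix

open Matrix in
theorem shamir_t_minus_one_shares_independent_general (F : Type) [Field F] [Fintype F]
    [DecidableEq F] (t : ℕ) (S : F)
    (x : Fin (t - 1) → F) (hx : Function.Injective x) (hx0 : ∀ j, x j ≠ 0)
    (y : Fin (t - 1) → F) :
    (Fintype.card {a : Fin (t - 1) → F //
        ∀ j, S + ∑ k : Fin (t - 1), a k * (x j) ^ (k.val + 1) = y j} : ℚ) /
        (Fintype.card F : ℚ) ^ (t - 1) =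
      ((Fintype.card F : ℚ) ^ (t - 1))⁻¹ := by
  have hunit : IsUnit (shiftedVandermonde x) :=
    (isUnit_iff_isUnit_det _).2 (det_shiftedVandermonde_ne_zero hx hx0).isUnit
  have hshares : ∀ a : Fin (t - 1) → F,
      (∀ j, S + ∑ k, a k * x j ^ (k.val + 1) = y j) ↔
        shiftedVandermonde x *ᵥ a = fun j => y j - S := by
    intro a
    simp only [funext_iff, mulVec, dotProduct, shiftedVandermonde, of_apply,
      eq_sub_iff_add_eq', mul_comm (a _)]
  rw [Fintype.card_congr (Equiv.subtypeEquivRight hshares),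
    (mulVec_bijective_of_isUnit hunit).card_subtype_apply_eq_one, Nat.cast_one, one_div]

/-- Information-theoretic security of Shamir's Secret Sharing: for any secret `S`,
distinct nonzero evaluation points `x_1,…,x_{t-1}`, and any target values `y_j`, the
probability over the uniform independent choice of coefficients `a_1,…,a_{t-1}` that
`f (x j) = y j` for all `j` equals `|F|^{-(t-1)}`. -/
theorem shamir_t_minus_one_shares_independent (F : Type) [Field F] [Fintype F]
    [DecidableEq F] (t : ℕ) (ht : 2 ≤ t) (S : F)
    (x : Fin (t - 1) → F) (hx : Function.Injective x) (hx0 : ∀ j, x j ≠ 0)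
    (y : Fin (t - 1) → F) :
    (Fintype.card {a : Fin (t - 1) → F //
        ∀ j, S + ∑ k : Fin (t - 1), a k * (x j) ^ (k.val + 1) = y j} : ℚ) /
        (Fintype.card F : ℚ) ^ (t - 1) =
      ((Fintype.card F : ℚ) ^ (t - 1))⁻¹ :=
  shamir_t_minus_one_shares_independent_general F t S x hx hx0 y
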